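/- arXiv:math/0401386 — 3 statements merged into one kernel-verified Lean document; each statement's English description precedes it below -/
import Mathlib

section
/- Let U ⊂ ℝ^m and V ⊂ ℝ^p be convex precompact open sets, let k ≥ 1 be an integer and let λ ∈ [0,1). Given f ∈ C^{k+2}(V̄;ℝ) and u₀ ∈ C^{k,λ}(Ū;V), there exist δ > 0 and a constant C = C(U,V,k,λ,f,u₀,δ) such that for every u ∈ C^{k,λ}(Ū;V) with ‖u − u₀‖_{k,λ;Ū} ≤ δ one has ‖f∘u − f∘u₀‖_{k,λ;Ū} ≤ C ‖u − u₀‖_{k,λ;Ū}. -/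
/-!
Measure `C^{i,λ}` regularity in max form: `a` bounds all derivatives of order `≤ i` and is a
`λ`-Hölder constant of the `i`-th one. On a convex set of diameter `≤ R`, `R ≥ 1`, the mean value
theorem turns a `C^{i+1,λ}` bound `a` into a `C^{i,λ}` bound `R a`, which makes induction on `i`
work: products `B (f₁, f₂)` obey a Leibniz estimate, compositions are handled through
`D (g ∘ w) = Dg(w) · Dw`, and differences through
`D (g ∘ u - g ∘ u₀) = (Dg(u) - Dg(u₀)) · Du + Dg(u₀) · D(u - u₀)`.
At order `0` the difference is controlled by the four-point estimate
`‖g a - g b - (g c - g d)‖ ≤ ‖Dg‖ ‖(a - b) - (c - d)‖ + Lip(Dg) max(‖a - b‖, ‖c - d‖) ‖b - d‖`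
(the mean value theorem for `τ ↦ g (c + τ (a - c)) - g (d + τ (b - d))`).
The Hölder norm and the max form agree up to a factor `k + 2`, and `‖u - u₀‖ ≤ 1` bounds `u`
uniformly, so the order-`k` difference estimate gives the theorem.
-/

open Set

noncomputable section

/-- Membership in the Hölder space `C^{k,λ}(closure W; F)`: all partial derivatives of
order `≤ k` extend continuously to `closure W`, and the order-`k` derivative is
`λ`-Hölder continuous on `closure W`. -/
def HolderSpaceMem {E F : Type*} [NormedAddCommGroup E] [NormedSpace ℝ E]
    [NormedAddCommGroup F] [NormedSpace ℝ F]
    (k : ℕ) (lam : ℝ) (W : Set E) (u : E → F) : Prop :=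
  ContDiffOn ℝ k u (closure W) ∧
    ∃ C : ℝ, ∀ x ∈ closure W, ∀ y ∈ closure W,
      ‖iteratedFDerivWithin ℝ k u (closure W) x - iteratedFDerivWithin ℝ k u (closure W) y‖
        ≤ C * ‖x - y‖ ^ lam

/-- The `C^{k,λ}` Hölder norm on `closure W`: the sum of the sup norms of the partial
derivatives of order `≤ k`, plus (when `λ ≠ 0`) the `λ`-Hölder seminorm of the order-`k`
derivative. -/
noncomputable def holderSpaceNorm {E F : Type*} [NormedAddCommGroup E] [NormedSpace ℝ E]
    [NormedAddCommGroup F] [NormedSpace ℝ F]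
    (k : ℕ) (lam : ℝ) (W : Set E) (u : E → F) : ℝ :=
  (∑ i ∈ Finset.range (k + 1),
    ⨆ x : closure W, ‖iteratedFDerivWithin ℝ i u (closure W) (x : E)‖) +
  if lam = 0 then 0 else
    ⨆ q : (closure W) ×ˢ (closure W),
      ‖iteratedFDerivWithin ℝ k u (closure W) (q : E × E).1 -
        iteratedFDerivWithin ℝ k u (closure W) (q : E × E).2‖ /
        ‖(q : E × E).1 - (q : E × E).2‖ ^ lam

-- One universe for all spaces: the inductions on the order pass from `F` to `E →L[ℝ] F`.
universe u

theorem le_mul_rpow_of_le {lam r R : ℝ} (hlam : lam ∈ Icc (0 : ℝ) 1) (hr : 0 ≤ r)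
    (hrR : r ≤ R) (hR1 : 1 ≤ R) : r ≤ R * r ^ lam := by
  rcases le_total r 1 with hr1 | hr1
  · calc r = r ^ (1 : ℝ) := (Real.rpow_one r).symm
      _ ≤ r ^ lam := Real.rpow_le_rpow_of_exponent_ge' hr hr1 hlam.1 hlam.2
      _ ≤ R * r ^ lam := le_mul_of_one_le_left (Real.rpow_nonneg hr _) hR1
  · calc r ≤ R := hrR
      _ ≤ R * r ^ lam := le_mul_of_one_le_right (by linarith) (Real.one_le_rpow hr1 hlam.1)

theorem IsOpen.uniqueDiffOn_closure {E : Type*} [NormedAddCommGroup E] [NormedSpace ℝ E]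
    {U : Set E} (hUo : IsOpen U) (hU : Convex ℝ U) : UniqueDiffOn ℝ (closure U) := by
  rcases U.eq_empty_or_nonempty with rfl | ⟨x, hx⟩
  · simpa using uniqueDiffOn_empty
  · exact uniqueDiffOn_convex hU.closure ⟨x, interior_maximal subset_closure hUo hx⟩

section Bounds

variable {E F : Type u} [NormedAddCommGroup E] [NormedSpace ℝ E] [NormedAddCommGroup F]
  [NormedSpace ℝ F] {s : Set E} {lam R a b c : ℝ} {i n : ℕ} {f g : E → F}

theorem norm_iteratedFDerivWithin_zero_sub (f : E → F) (x y : E) :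
    ‖iteratedFDerivWithin ℝ 0 f s x - iteratedFDerivWithin ℝ 0 f s y‖ = ‖f x - f y‖ := by
  rw [iteratedFDerivWithin_zero_eq_comp, Function.comp_apply, Function.comp_apply,
    ← LinearIsometryEquiv.map_sub, LinearIsometryEquiv.norm_map]

theorem norm_iteratedFDerivWithin_succ_sub (hs : UniqueDiffOn ℝ s) {x y : E} (hx : x ∈ s)
    (hy : y ∈ s) :
    ‖iteratedFDerivWithin ℝ (n + 1) f s x - iteratedFDerivWithin ℝ (n + 1) f s y‖ =
      ‖iteratedFDerivWithin ℝ n (fderivWithin ℝ f s) s x -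
        iteratedFDerivWithin ℝ n (fderivWithin ℝ f s) s y‖ := by
  rw [iteratedFDerivWithin_succ_eq_comp_right hs hx, iteratedFDerivWithin_succ_eq_comp_right hs hy,
    Function.comp_apply, Function.comp_apply, ← LinearIsometryEquiv.map_sub,
    LinearIsometryEquiv.norm_map]

structure DerivBound (n : ℕ) (s : Set E) (f : E → F) (c : ℝ) : Prop where
  contDiffOn : ContDiffOn ℝ n f s
  nonneg : 0 ≤ c
  norm_le : ∀ j ≤ n, ∀ x ∈ s, ‖iteratedFDerivWithin ℝ j f s x‖ ≤ c

/-- `a` bounds the `C^{i,λ}(s)` norm of `f` in its max form: it bounds the derivatives of order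
`≤ i` on `s` and is a `λ`-Hölder constant of the `i`-th one. -/
structure HolderBound (i : ℕ) (lam : ℝ) (s : Set E) (f : E → F) (a : ℝ) : Prop
    extends DerivBound i s f a where
  holder : ∀ x ∈ s, ∀ y ∈ s,
    ‖iteratedFDerivWithin ℝ i f s x - iteratedFDerivWithin ℝ i f s y‖ ≤ a * ‖x - y‖ ^ lam

theorem DerivBound.of_le (hf : DerivBound n s f c) {m : ℕ} (hmn : m ≤ n) : DerivBound m s f c :=
  ⟨hf.contDiffOn.of_le (by exact_mod_cast hmn), hf.nonneg,
    fun j hj => hf.norm_le j (hj.trans hmn)⟩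

theorem DerivBound.norm_apply_le (hf : DerivBound n s f c) {x : E} (hx : x ∈ s) : ‖f x‖ ≤ c := by
  simpa using hf.norm_le 0 n.zero_le x hx

theorem DerivBound.differentiableOn (hf : DerivBound (n + 1) s f c) : DifferentiableOn ℝ f s :=
  hf.contDiffOn.differentiableOn (by simp)

theorem derivBound_fderivWithin (hs : UniqueDiffOn ℝ s) (hf : DerivBound (n + 1) s f c) :
    DerivBound n s (fderivWithin ℝ f s) c where
  contDiffOn := hf.contDiffOn.fderivWithin hs (by push_cast; rfl)
  nonneg := hf.nonneg
  norm_le j hj x hx := by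
    rw [norm_iteratedFDerivWithin_fderivWithin hs hx]
    exact hf.norm_le (j + 1) (by omega) x hx

theorem DerivBound.norm_fderivWithin_le (hs : UniqueDiffOn ℝ s) (hf : DerivBound (n + 1) s f c)
    {x : E} (hx : x ∈ s) : ‖fderivWithin ℝ f s x‖ ≤ c :=
  (derivBound_fderivWithin hs hf).norm_apply_le hx

theorem DerivBound.norm_iteratedFDerivWithin_sub_le (hconv : Convex ℝ s) (hs : UniqueDiffOn ℝ s)
    (hf : DerivBound (n + 1) s f c) {x y : E} (hx : x ∈ s) (hy : y ∈ s) :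
    ‖iteratedFDerivWithin ℝ n f s x - iteratedFDerivWithin ℝ n f s y‖ ≤ c * ‖x - y‖ := by
  refine hconv.norm_image_sub_le_of_norm_fderivWithin_le
    (hf.contDiffOn.differentiableOn_iteratedFDerivWithin (by exact_mod_cast n.lt_succ_self) hs)
    (fun z hz => ?_) hy hx
  rw [norm_fderivWithin_iteratedFDerivWithin]
  exact hf.norm_le (n + 1) le_rfl z hz

theorem DerivBound.norm_sub_le (hconv : Convex ℝ s) (hs : UniqueDiffOn ℝ s)
    (hf : DerivBound (n + 1) s f c) {x y : E} (hx : x ∈ s) (hy : y ∈ s) :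
    ‖f x - f y‖ ≤ c * ‖x - y‖ := by
  simpa only [norm_iteratedFDerivWithin_zero_sub] using
    (hf.of_le (Nat.le_add_left 1 n)).norm_iteratedFDerivWithin_sub_le hconv hs hx hy

theorem HolderBound.mono (hf : HolderBound i lam s f a) (hab : a ≤ b) :
    HolderBound i lam s f b where
  contDiffOn := hf.contDiffOn
  nonneg := hf.nonneg.trans hab
  norm_le j hj x hx := (hf.norm_le j hj x hx).trans hab
  holder x hx y hy := (hf.holder x hx y hy).trans (by gcongr)

theorem HolderBound.congr (hf : HolderBound i lam s f a) (heq : EqOn f g s) :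
    HolderBound i lam s g a where
  contDiffOn := hf.contDiffOn.congr heq.symm
  nonneg := hf.nonneg
  norm_le j hj x hx := by
    rw [iteratedFDerivWithin_congr heq.symm hx]
    exact hf.norm_le j hj x hx
  holder x hx y hy := by
    rw [iteratedFDerivWithin_congr heq.symm hx, iteratedFDerivWithin_congr heq.symm hy]
    exact hf.holder x hx y hy

theorem HolderBound.add (hs : UniqueDiffOn ℝ s) (hf : HolderBound i lam s f a)
    (hg : HolderBound i lam s g b) : HolderBound i lam s (f + g) (a + b) := by
  have hD : ∀ j ≤ i, ∀ x ∈ s, iteratedFDerivWithin ℝ j (f + g) s x =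
      iteratedFDerivWithin ℝ j f s x + iteratedFDerivWithin ℝ j g s x := fun j hj x hx =>
    iteratedFDerivWithin_add_apply (hf.contDiffOn.of_le (by exact_mod_cast hj) x hx)
      (hg.contDiffOn.of_le (by exact_mod_cast hj) x hx) hs hx
  refine ⟨⟨hf.contDiffOn.add hg.contDiffOn, add_nonneg hf.nonneg hg.nonneg,
    fun j hj x hx => ?_⟩, fun x hx y hy => ?_⟩
  · rw [hD j hj x hx]
    exact (norm_add_le _ _).trans (add_le_add (hf.norm_le j hj x hx) (hg.norm_le j hj x hx))
  · rw [hD i le_rfl x hx, hD i le_rfl y hy, add_sub_add_comm, add_mul]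
    exact (norm_add_le _ _).trans (add_le_add (hf.holder x hx y hy) (hg.holder x hx y hy))

theorem HolderBound.of_succ (hconv : Convex ℝ s) (hs : UniqueDiffOn ℝ s) (hR1 : 1 ≤ R)
    (hR : ∀ x ∈ s, ∀ y ∈ s, ‖x - y‖ ≤ R) (hlam : lam ∈ Icc (0 : ℝ) 1)
    (hf : HolderBound (i + 1) lam s f a) : HolderBound i lam s f (R * a) where
  contDiffOn := hf.contDiffOn.of_le (by exact_mod_cast i.le_succ)
  nonneg := mul_nonneg (by linarith) hf.nonneg
  norm_le j hj x hx := (hf.norm_le j (hj.trans i.le_succ) x hx).trans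
    (le_mul_of_one_le_left hf.nonneg hR1)
  holder x hx y hy :=
    calc _ ≤ a * ‖x - y‖ := hf.norm_iteratedFDerivWithin_sub_le hconv hs hx hy
      _ ≤ a * (R * ‖x - y‖ ^ lam) :=
        mul_le_mul_of_nonneg_left (le_mul_rpow_of_le hlam (norm_nonneg _) (hR x hx y hy) hR1)
          hf.nonneg
      _ = R * a * ‖x - y‖ ^ lam := by ring

theorem holderBound_fderivWithin (hs : UniqueDiffOn ℝ s) (hf : HolderBound (i + 1) lam s f a) :
    HolderBound i lam s (fderivWithin ℝ f s) a where
  toDerivBound := derivBound_fderivWithin hs hf.toDerivBound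
  holder x hx y hy := by
    rw [← norm_iteratedFDerivWithin_succ_sub hs hx hy]
    exact hf.holder x hx y hy

theorem HolderBound.of_fderivWithin (hs : UniqueDiffOn ℝ s) (hd : DifferentiableOn ℝ f s)
    (h0 : ∀ x ∈ s, ‖f x‖ ≤ a) (hD : HolderBound i lam s (fderivWithin ℝ f s) a) :
    HolderBound (i + 1) lam s f a where
  contDiffOn := by
    rw [Nat.cast_succ, contDiffOn_succ_iff_fderivWithin hs]
    exact ⟨hd, by simp, hD.contDiffOn⟩
  nonneg := hD.nonneg
  norm_le j hj x hx := by
    cases j with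
    | zero => simpa using h0 x hx
    | succ j =>
      rw [← norm_iteratedFDerivWithin_fderivWithin hs hx]
      exact hD.norm_le j (by omega) x hx
  holder x hx y hy := by
    rw [norm_iteratedFDerivWithin_succ_sub hs hx hy]
    exact hD.holder x hx y hy

theorem holderBound_zero_iff :
    HolderBound 0 lam s f a ↔ ContinuousOn f s ∧ 0 ≤ a ∧ (∀ x ∈ s, ‖f x‖ ≤ a) ∧
      ∀ x ∈ s, ∀ y ∈ s, ‖f x - f y‖ ≤ a * ‖x - y‖ ^ lam := by
  constructor
  · rintro ⟨⟨hcd, ha, hle⟩, hhol⟩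
    refine ⟨contDiffOn_zero.1 (by exact_mod_cast hcd), ha,
      fun x hx => by simpa using hle 0 le_rfl x hx, fun x hx y hy => ?_⟩
    rw [← norm_iteratedFDerivWithin_zero_sub]
    exact hhol x hx y hy
  · rintro ⟨hc, ha, hle, hhol⟩
    refine ⟨⟨by exact_mod_cast contDiffOn_zero.2 hc, ha, fun j hj x hx => ?_⟩, fun x hx y hy => ?_⟩
    · obtain rfl := Nat.le_zero.1 hj
      simpa using hle x hx
    · rw [norm_iteratedFDerivWithin_zero_sub]
      exact hhol x hx y hy

end Bounds

section Leibniz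

variable {E F G H : Type u} [NormedAddCommGroup E] [NormedSpace ℝ E] [NormedAddCommGroup F]
  [NormedSpace ℝ F] [NormedAddCommGroup G] [NormedSpace ℝ G] [NormedAddCommGroup H]
  [NormedSpace ℝ H] {s : Set E} {lam R a b : ℝ} {i j : ℕ}

theorem DerivBound.norm_bilinear_le (B : F →L[ℝ] G →L[ℝ] H) {f₁ : E → F} {f₂ : E → G}
    (h₁ : DerivBound i s f₁ a) (h₂ : DerivBound j s f₂ b) {x : E} (hx : x ∈ s) :
    ‖B (f₁ x) (f₂ x)‖ ≤ ‖B‖ * a * b := by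
  have := h₁.norm_apply_le hx
  have := h₂.norm_apply_le hx
  have := h₁.nonneg
  exact (B.le_opNorm₂ _ _).trans (by gcongr)

theorem HolderBound.bilinear (hconv : Convex ℝ s) (hs : UniqueDiffOn ℝ s) (hR1 : 1 ≤ R)
    (hR : ∀ x ∈ s, ∀ y ∈ s, ‖x - y‖ ≤ R) (hlam : lam ∈ Icc (0 : ℝ) 1)
    (B : F →L[ℝ] G →L[ℝ] H) {f₁ : E → F} {f₂ : E → G} (h₁ : HolderBound i lam s f₁ a)
    (h₂ : HolderBound i lam s f₂ b) :
    HolderBound i lam s (fun x => B (f₁ x) (f₂ x)) ((2 * R) ^ (i + 1) * (‖B‖ * a * b)) := by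
  have hpow (n : ℕ) : 1 ≤ (2 * R) ^ n := one_le_pow₀ (by linarith)
  induction i generalizing F G H a b with
  | zero =>
    have hB {x} (hx : x ∈ s) := h₁.norm_bilinear_le B h₂.toDerivBound hx
    rw [holderBound_zero_iff] at h₁ h₂ ⊢
    obtain ⟨hc₁, ha, hle₁, hhol₁⟩ := h₁
    obtain ⟨hc₂, hb, hle₂, hhol₂⟩ := h₂
    refine ⟨B.continuous₂.comp_continuousOn (hc₁.prodMk hc₂), by positivity,
      fun x hx => (hB hx).trans (le_mul_of_one_le_left (by positivity) (hpow _)),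
      fun x hx y hy => ?_⟩
    have hsplit : B (f₁ x) (f₂ x) - B (f₁ y) (f₂ y) =
        B (f₁ x - f₁ y) (f₂ x) + B (f₁ y) (f₂ x - f₂ y) := by
      simp only [map_sub, sub_apply]
      abel
    have := hhol₁ x hx y hy
    have := hhol₂ x hx y hy
    have := hle₁ y hy
    have := hle₂ x hx
    calc ‖B (f₁ x) (f₂ x) - B (f₁ y) (f₂ y)‖
        ≤ ‖B‖ * ‖f₁ x - f₁ y‖ * ‖f₂ x‖ + ‖B‖ * ‖f₁ y‖ * ‖f₂ x - f₂ y‖ :=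
          hsplit ▸ (norm_add_le _ _).trans (add_le_add (B.le_opNorm₂ _ _) (B.le_opNorm₂ _ _))
      _ ≤ ‖B‖ * (a * ‖x - y‖ ^ lam) * b + ‖B‖ * a * (b * ‖x - y‖ ^ lam) := by gcongr
      _ = 2 * (‖B‖ * a * b) * ‖x - y‖ ^ lam := by ring
      _ ≤ (2 * R) ^ (0 + 1) * (‖B‖ * a * b) * ‖x - y‖ ^ lam := by
          gcongr
          rw [zero_add, pow_one]
          linarith
  | succ i ih =>
    have ha := h₁.nonneg
    have hb := h₂.nonneg
    have hderiv : EqOn (fderivWithin ℝ (fun x => B (f₁ x) (f₂ x)) s)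
        ((fun x => B.precompR E (f₁ x) (fderivWithin ℝ f₂ s x)) +
          fun x => B.precompL E (fderivWithin ℝ f₁ s x) (f₂ x)) s := fun x hx =>
      B.fderivWithin_of_bilinear (h₁.differentiableOn x hx) (h₂.differentiableOn x hx) (hs x hx)
    have hD := (ih (B.precompR E) (h₁.of_succ hconv hs hR1 hR hlam)
      (holderBound_fderivWithin hs h₂)).add hs
      (ih (B.precompL E) (holderBound_fderivWithin hs h₁) (h₂.of_succ hconv hs hR1 hR hlam))
    refine HolderBound.of_fderivWithin hs
      ((B.differentiable.comp_differentiableOn h₁.differentiableOn).clm_apply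
        h₂.differentiableOn)
      (fun x hx => (h₁.norm_bilinear_le B h₂.toDerivBound hx).trans
        (le_mul_of_one_le_left (by positivity) (hpow _)))
      ((hD.congr hderiv.symm).mono ?_)
    calc _ ≤ (2 * R) ^ (i + 1) * (‖B‖ * (R * a) * b) +
          (2 * R) ^ (i + 1) * (‖B‖ * a * (R * b)) := by
          have := h₁.nonneg
          gcongr
          exacts [B.norm_precompR_le E, B.norm_precompL_le E]
      _ = (2 * R) ^ (i + 1 + 1) * (‖B‖ * a * b) := by ring

end Leibniz

theorem norm_add_smul_sub_sub_add_smul_sub_le {P : Type*} [NormedAddCommGroup P]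
    [NormedSpace ℝ P] (a b c d : P) {τ : ℝ} (hτ : τ ∈ Icc (0 : ℝ) 1) :
    ‖c + τ • (a - c) - (d + τ • (b - d))‖ ≤ max ‖a - b‖ ‖c - d‖ := by
  have hmem := convex_closedBall (0 : P) (max ‖a - b‖ ‖c - d‖)
    (mem_closedBall_zero_iff.2 (le_max_right ‖a - b‖ ‖c - d‖))
    (mem_closedBall_zero_iff.2 (le_max_left ‖a - b‖ ‖c - d‖))
    (sub_nonneg.2 hτ.2) hτ.1 (sub_add_cancel 1 τ)
  have hcomb : c + τ • (a - c) - (d + τ • (b - d)) = (1 - τ) • (c - d) + τ • (a - b) := by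
    simp only [sub_smul, one_smul, smul_sub]
    abel
  exact hcomb ▸ mem_closedBall_zero_iff.1 hmem

theorem Convex.norm_image_sub_image_sub_image_sub_image_le {P W : Type*} [NormedAddCommGroup P]
    [NormedSpace ℝ P] [NormedAddCommGroup W] [NormedSpace ℝ W] {t : Set P} (ht : Convex ℝ t)
    {g : P → W} (hg : DifferentiableOn ℝ g t) {c₁ c₂ : ℝ} (hc₂ : 0 ≤ c₂)
    (h₁ : ∀ z ∈ t, ‖fderivWithin ℝ g t z‖ ≤ c₁)
    (h₂ : ∀ z ∈ t, ∀ w ∈ t, ‖fderivWithin ℝ g t z - fderivWithin ℝ g t w‖ ≤ c₂ * ‖z - w‖)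
    {a b c d : P} (ha : a ∈ t) (hb : b ∈ t) (hc : c ∈ t) (hd : d ∈ t) :
    ‖g a - g b - (g c - g d)‖ ≤
      c₁ * ‖a - b - (c - d)‖ + c₂ * max ‖a - b‖ ‖c - d‖ * ‖b - d‖ := by
  set p : ℝ → P := fun τ => c + τ • (a - c)
  set q : ℝ → P := fun τ => d + τ • (b - d)
  have hpt : ∀ τ ∈ Icc (0 : ℝ) 1, p τ ∈ t := fun τ hτ => ht.add_smul_sub_mem hc ha hτ
  have hqt : ∀ τ ∈ Icc (0 : ℝ) 1, q τ ∈ t := fun τ hτ => ht.add_smul_sub_mem hd hb hτ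
  have hderiv : ∀ τ ∈ Icc (0 : ℝ) 1, HasDerivWithinAt (fun τ => g (p τ) - g (q τ))
      (fderivWithin ℝ g t (p τ) (a - c) - fderivWithin ℝ g t (q τ) (b - d)) (Icc 0 1) τ := by
    intro τ hτ
    have hp : HasDerivWithinAt p (a - c) (Icc 0 1) τ := by
      have := ((hasDerivAt_id τ).smul_const (a - c)).const_add c
      rw [one_smul] at this
      exact this.hasDerivWithinAt
    have hq : HasDerivWithinAt q (b - d) (Icc 0 1) τ := by
      have := ((hasDerivAt_id τ).smul_const (b - d)).const_add d
      rw [one_smul] at this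
      exact this.hasDerivWithinAt
    exact ((hg _ (hpt τ hτ)).hasFDerivWithinAt.comp_hasDerivWithinAt τ hp hpt).sub
      ((hg _ (hqt τ hτ)).hasFDerivWithinAt.comp_hasDerivWithinAt τ hq hqt)
  have hpq (τ) (hτ : τ ∈ Icc (0 : ℝ) 1) : ‖p τ - q τ‖ ≤ max ‖a - b‖ ‖c - d‖ :=
    norm_add_smul_sub_sub_add_smul_sub_le a b c d hτ
  have habcd : a - c - (b - d) = a - b - (c - d) := by abel
  calc ‖g a - g b - (g c - g d)‖ = ‖g (p 1) - g (q 1) - (g (p 0) - g (q 0))‖ := by simp [p, q]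
    _ ≤ _ := norm_image_sub_le_of_norm_deriv_le_segment_01' hderiv fun τ hτ => ?_
  · have hτ' := Ico_subset_Icc_self hτ
    rw [show fderivWithin ℝ g t (p τ) (a - c) - fderivWithin ℝ g t (q τ) (b - d) =
        fderivWithin ℝ g t (p τ) (a - b - (c - d)) +
          (fderivWithin ℝ g t (p τ) - fderivWithin ℝ g t (q τ)) (b - d) by
      rw [← habcd]; simp only [map_sub, sub_apply]; abel]
    refine (norm_add_le _ _).trans (add_le_add ?_ ?_)
    · exact ((fderivWithin ℝ g t (p τ)).le_opNorm _).trans (by gcongr; exact h₁ _ (hpt τ hτ'))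
    · refine ((fderivWithin ℝ g t (p τ) - fderivWithin ℝ g t (q τ)).le_opNorm _).trans ?_
      gcongr
      exact (h₂ _ (hpt τ hτ') _ (hqt τ hτ')).trans (mul_le_mul_of_nonneg_left (hpq τ hτ') hc₂)

section Composition

variable {E P : Type u} [NormedAddCommGroup E] [NormedSpace ℝ E] [NormedAddCommGroup P]
  [NormedSpace ℝ P] {s : Set E} {t : Set P} {lam R : ℝ}

open ContinuousLinearMap

theorem exists_holderBound_comp (hconv : Convex ℝ s) (hs : UniqueDiffOn ℝ s) (hR1 : 1 ≤ R)
    (hR : ∀ x ∈ s, ∀ y ∈ s, ‖x - y‖ ≤ R) (hlam : lam ∈ Icc (0 : ℝ) 1) (htc : Convex ℝ t)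
    (ht : UniqueDiffOn ℝ t) (i : ℕ) (M : ℝ) :
    ∃ C, ∀ {W : Type u} [NormedAddCommGroup W] [NormedSpace ℝ W] (g : P → W) (w : E → P) (c : ℝ),
      HolderBound i lam s w M → MapsTo w s t → DerivBound (i + 1) t g c →
        HolderBound i lam s (g ∘ w) (C * c) := by
  induction i generalizing M with
  | zero =>
    refine ⟨max 1 M, fun g w c hw hwt hg => ?_⟩
    have hc := hg.nonneg
    rw [holderBound_zero_iff] at hw ⊢
    obtain ⟨hwc, hM, -, hwhol⟩ := hw
    refine ⟨hg.contDiffOn.continuousOn.comp hwc hwt, by positivity,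
      fun x hx => (hg.norm_apply_le (hwt hx)).trans (le_mul_of_one_le_left hc (le_max_left _ _)),
      fun x hx y hy => ?_⟩
    have := hwhol x hx y hy
    calc ‖g (w x) - g (w y)‖ ≤ c * ‖w x - w y‖ := hg.norm_sub_le htc ht (hwt hx) (hwt hy)
      _ ≤ c * (M * ‖x - y‖ ^ lam) := by gcongr
      _ = M * c * ‖x - y‖ ^ lam := by ring
      _ ≤ max 1 M * c * ‖x - y‖ ^ lam := by gcongr; exact le_max_right _ _
  | succ i ih =>
    obtain ⟨C, hC⟩ := ih (R * M)
    refine ⟨max 1 ((2 * R) ^ (i + 1) * (C * M)), fun {W} _ _ g w c hw hwt hg => ?_⟩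
    have hc := hg.nonneg
    have hchain : EqOn (fderivWithin ℝ (g ∘ w) s)
        (fun x => compL ℝ E P W ((fderivWithin ℝ g t ∘ w) x) (fderivWithin ℝ w s x)) s :=
      fun x hx => fderivWithin_comp x (hg.differentiableOn _ (hwt hx))
        (hw.differentiableOn x hx) hwt (hs x hx)
    have hDgw := hC (fderivWithin ℝ g t) w c (hw.of_succ hconv hs hR1 hR hlam) hwt
      (derivBound_fderivWithin ht hg)
    refine HolderBound.of_fderivWithin hs (hg.differentiableOn.comp hw.differentiableOn hwt)
      (fun x hx => (hg.norm_apply_le (hwt hx)).trans (le_mul_of_one_le_left hc (le_max_left _ _)))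
      (((hDgw.bilinear hconv hs hR1 hR hlam (compL ℝ E P W)
        (holderBound_fderivWithin hs hw)).congr hchain.symm).mono ?_)
    have := hDgw.nonneg
    have := hw.nonneg
    calc _ ≤ (2 * R) ^ (i + 1) * (1 * (C * c) * M) := by gcongr; exact norm_compL_le ℝ E P W
      _ = (2 * R) ^ (i + 1) * (C * M) * c := by ring
      _ ≤ _ := by gcongr; exact le_max_right _ _

theorem eqOn_fderivWithin_comp_sub_comp {W : Type u} [NormedAddCommGroup W] [NormedSpace ℝ W]
    (hs : UniqueDiffOn ℝ s) {g : P → W}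
    (hg : DifferentiableOn ℝ g t) {u₀ u : E → P} (hu₀ : DifferentiableOn ℝ u₀ s)
    (hu : DifferentiableOn ℝ u s) (hu₀t : MapsTo u₀ s t) (hut : MapsTo u s t) :
    EqOn (fderivWithin ℝ (g ∘ u - g ∘ u₀) s)
      ((fun x => compL ℝ E P W ((fderivWithin ℝ g t ∘ u - fderivWithin ℝ g t ∘ u₀) x)
          (fderivWithin ℝ u s x)) +
        fun x => compL ℝ E P W ((fderivWithin ℝ g t ∘ u₀) x) (fderivWithin ℝ (u - u₀) s x)) s := by
  intro x hx
  simp only [Pi.add_apply]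
  rw [fderivWithin_sub (hs x hx) (hg.comp hu hut x hx) (hg.comp hu₀ hu₀t x hx),
    fderivWithin_comp x (hg _ (hut hx)) (hu x hx) hut (hs x hx),
    fderivWithin_comp x (hg _ (hu₀t hx)) (hu₀ x hx) hu₀t (hs x hx),
    fderivWithin_sub (hs x hx) (hu x hx) (hu₀ x hx)]
  simp only [Pi.sub_apply, Function.comp_apply, compL_apply, sub_comp, comp_sub]
  abel

theorem DerivBound.norm_comp_sub_comp_le {W : Type u} [NormedAddCommGroup W] [NormedSpace ℝ W]
    (htc : Convex ℝ t) (ht : UniqueDiffOn ℝ t) {g : P → W} {c n : ℝ} {i j : ℕ}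
    (hg : DerivBound (j + 1) t g c) {u₀ u : E → P} (hv : DerivBound i s (u - u₀) n)
    (hu₀t : MapsTo u₀ s t) (hut : MapsTo u s t) {x : E} (hx : x ∈ s) :
    ‖g (u x) - g (u₀ x)‖ ≤ c * n :=
  (hg.norm_sub_le htc ht (hut hx) (hu₀t hx)).trans
    (mul_le_mul_of_nonneg_left (hv.norm_apply_le hx) hg.nonneg)

theorem holderBound_zero_comp_sub_comp {W : Type u} [NormedAddCommGroup W] [NormedSpace ℝ W]
    (htc : Convex ℝ t) (ht : UniqueDiffOn ℝ t) {g : P → W} {c n M : ℝ}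
    (hg : DerivBound 2 t g c) {u₀ u : E → P} (hu₀ : HolderBound 0 lam s u₀ M)
    (hu : ContinuousOn u s) (hv : HolderBound 0 lam s (u - u₀) n) (hu₀t : MapsTo u₀ s t)
    (hut : MapsTo u s t) :
    HolderBound 0 lam s (g ∘ u - g ∘ u₀) ((1 + M) * (c * n)) := by
  have hc := hg.nonneg
  have hsup (x) (hx : x ∈ s) := hg.norm_comp_sub_comp_le htc ht hv.toDerivBound hu₀t hut hx
  rw [holderBound_zero_iff] at hu₀ hv ⊢
  obtain ⟨hu₀c, hM, -, hu₀hol⟩ := hu₀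
  obtain ⟨-, hn, hvle, hvhol⟩ := hv
  refine ⟨(hg.contDiffOn.continuousOn.comp hu hut).sub
    (hg.contDiffOn.continuousOn.comp hu₀c hu₀t), by positivity,
    fun x hx => (hsup x hx).trans (le_mul_of_one_le_left (by positivity) (by linarith)),
    fun x hx y hy => ?_⟩
  have hfour := htc.norm_image_sub_image_sub_image_sub_image_le hg.differentiableOn hc
    (fun z hz => hg.norm_fderivWithin_le ht hz)
    (fun z hz w hw => (derivBound_fderivWithin ht hg).norm_sub_le htc ht hz hw)
    (hut hx) (hu₀t hx) (hut hy) (hu₀t hy)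
  have := hvhol x hx y hy
  have := max_le (hvle x hx) (hvle y hy)
  have := hu₀hol x hx y hy
  calc ‖g (u x) - g (u₀ x) - (g (u y) - g (u₀ y))‖
      ≤ c * ‖u x - u₀ x - (u y - u₀ y)‖ +
        c * max ‖u x - u₀ x‖ ‖u y - u₀ y‖ * ‖u₀ x - u₀ y‖ := hfour
    _ ≤ c * (n * ‖x - y‖ ^ lam) + c * n * (M * ‖x - y‖ ^ lam) := by gcongr <;> assumption
    _ = (1 + M) * (c * n) * ‖x - y‖ ^ lam := by ring

theorem exists_holderBound_comp_sub_comp (hconv : Convex ℝ s) (hs : UniqueDiffOn ℝ s)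
    (hR1 : 1 ≤ R) (hR : ∀ x ∈ s, ∀ y ∈ s, ‖x - y‖ ≤ R) (hlam : lam ∈ Icc (0 : ℝ) 1)
    (htc : Convex ℝ t) (ht : UniqueDiffOn ℝ t) (i : ℕ) (M : ℝ) :
    ∃ C, ∀ {W : Type u} [NormedAddCommGroup W] [NormedSpace ℝ W] (g : P → W) (u₀ u : E → P)
      (c n : ℝ), HolderBound i lam s u₀ M → HolderBound i lam s u M →
      HolderBound i lam s (u - u₀) n → MapsTo u₀ s t → MapsTo u s t → DerivBound (i + 2) t g c →
        HolderBound i lam s (g ∘ u - g ∘ u₀) (C * (c * n)) := by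
  induction i generalizing M with
  | zero => exact ⟨1 + M, fun g u₀ u c n hu₀ hu hv hu₀t hut hg =>
      holderBound_zero_comp_sub_comp htc ht hg hu₀ hu.contDiffOn.continuousOn hv hu₀t hut⟩
  | succ i ih =>
    obtain ⟨C, hC⟩ := ih (R * M)
    obtain ⟨C', hC'⟩ := exists_holderBound_comp hconv hs hR1 hR hlam htc ht i (R * M)
    refine ⟨max 1 ((2 * R) ^ (i + 1) * (C * R * M + C')),
      fun {W} _ _ g u₀ u c n hu₀ hu hv hu₀t hut hg => ?_⟩
    have hc := hg.nonneg
    have hn := hv.nonneg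
    have hDg := derivBound_fderivWithin ht hg
    have hdiff := hC (fderivWithin ℝ g t) u₀ u c (R * n) (hu₀.of_succ hconv hs hR1 hR hlam)
      (hu.of_succ hconv hs hR1 hR hlam) (hv.of_succ hconv hs hR1 hR hlam) hu₀t hut hDg
    have hcomp := hC' (fderivWithin ℝ g t) u₀ c (hu₀.of_succ hconv hs hR1 hR hlam) hu₀t
      (hDg.of_le (by omega))
    have hD := (hdiff.bilinear hconv hs hR1 hR hlam (compL ℝ E P W)
      (holderBound_fderivWithin hs hu)).add hs
      (hcomp.bilinear hconv hs hR1 hR hlam (compL ℝ E P W) (holderBound_fderivWithin hs hv))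
    refine HolderBound.of_fderivWithin hs
      ((hg.differentiableOn.comp hu.differentiableOn hut).sub
        (hg.differentiableOn.comp hu₀.differentiableOn hu₀t)) (fun x hx => ?_)
      ((hD.congr (eqOn_fderivWithin_comp_sub_comp hs hg.differentiableOn hu₀.differentiableOn
        hu.differentiableOn hu₀t hut).symm).mono ?_)
    · exact (hg.norm_comp_sub_comp_le htc ht hv.toDerivBound hu₀t hut hx).trans
        (le_mul_of_one_le_left (by positivity) (le_max_left _ _))
    · have := hdiff.nonneg
      have := hcomp.nonneg
      have := hu.nonneg
      calc _ ≤ (2 * R) ^ (i + 1) * (1 * (C * (c * (R * n))) * M) +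
            (2 * R) ^ (i + 1) * (1 * (C' * c) * n) := by
            gcongr <;> exact norm_compL_le ℝ E P W
        _ = (2 * R) ^ (i + 1) * (C * R * M + C') * (c * n) := by ring
        _ ≤ _ := by gcongr; exact le_max_right _ _

end Composition

section HolderSpace

variable {E F : Type u} [NormedAddCommGroup E] [NormedSpace ℝ E] [NormedAddCommGroup F]
  [NormedSpace ℝ F] {W : Set E} {k : ℕ} {lam a : ℝ} {u v : E → F}

theorem holderSpaceNorm_nonneg : 0 ≤ holderSpaceNorm k lam W u := by
  refine add_nonneg (Finset.sum_nonneg fun j _ => Real.iSup_nonneg fun x => norm_nonneg _) ?_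
  split_ifs
  exacts [le_rfl, Real.iSup_nonneg fun q => by positivity]

theorem norm_iteratedFDerivWithin_le_holderSpaceNorm (hW : IsCompact (closure W))
    (hs : UniqueDiffOn ℝ (closure W)) (hu : ContDiffOn ℝ k u (closure W)) {j : ℕ} (hj : j ≤ k)
    {x : E} (hx : x ∈ closure W) :
    ‖iteratedFDerivWithin ℝ j u (closure W) x‖ ≤ holderSpaceNorm k lam W u := by
  obtain ⟨C, hC⟩ := hW.exists_bound_of_continuousOn
    (hu.continuousOn_iteratedFDerivWithin (by exact_mod_cast hj) hs)
  have hsup := le_ciSup (f := fun x : closure W => ‖iteratedFDerivWithin ℝ j u (closure W) x‖)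
    ⟨C, by rintro _ ⟨y, rfl⟩; exact hC y y.2⟩ ⟨x, hx⟩
  refine hsup.trans ?_
  have hsum := Finset.single_le_sum
    (f := fun j => ⨆ x : closure W, ‖iteratedFDerivWithin ℝ j u (closure W) x‖)
    (fun j _ => Real.iSup_nonneg fun x => norm_nonneg _)
    (Finset.mem_range.2 (Nat.lt_succ_of_le hj))
  unfold holderSpaceNorm
  split_ifs
  · simpa using hsum
  · exact hsum.trans (le_add_of_nonneg_right (Real.iSup_nonneg fun q => by positivity))

theorem HolderSpaceMem.norm_iteratedFDerivWithin_sub_le (hlam : lam ≠ 0)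
    (hu : HolderSpaceMem k lam W u) {x y : E} (hx : x ∈ closure W) (hy : y ∈ closure W) :
    ‖iteratedFDerivWithin ℝ k u (closure W) x - iteratedFDerivWithin ℝ k u (closure W) y‖ ≤
      holderSpaceNorm k lam W u * ‖x - y‖ ^ lam := by
  obtain ⟨C, hC⟩ := hu.2
  rcases eq_or_ne x y with rfl | hxy
  · simp [Real.zero_rpow hlam]
  have hbdd : BddAbove (range fun q : closure W ×ˢ closure W =>
      ‖iteratedFDerivWithin ℝ k u (closure W) (q : E × E).1 -
        iteratedFDerivWithin ℝ k u (closure W) (q : E × E).2‖ /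
        ‖(q : E × E).1 - (q : E × E).2‖ ^ lam) := by
    refine ⟨max C 0, ?_⟩
    rintro _ ⟨⟨⟨x, y⟩, hx, hy⟩, rfl⟩
    exact div_le_of_le_mul₀ (by positivity) (le_max_right _ _)
      ((hC x hx y hy).trans (by gcongr; exact le_max_left _ _))
  have hquot := (le_ciSup hbdd ⟨(x, y), hx, hy⟩).trans <| show _ ≤ holderSpaceNorm k lam W u by
    unfold holderSpaceNorm
    rw [if_neg hlam]
    exact le_add_of_nonneg_left
      (Finset.sum_nonneg fun j _ => Real.iSup_nonneg fun x => norm_nonneg _)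
  exact (div_le_iff₀ (by positivity [sub_ne_zero.2 hxy])).1 hquot

theorem HolderSpaceMem.holderBound (hW : IsCompact (closure W)) (hs : UniqueDiffOn ℝ (closure W))
    (hu : HolderSpaceMem k lam W u) :
    HolderBound k lam (closure W) u (2 * holderSpaceNorm k lam W u) := by
  have hN : 0 ≤ holderSpaceNorm k lam W u := holderSpaceNorm_nonneg
  have hle {j : ℕ} (hj : j ≤ k) {x : E} (hx : x ∈ closure W) :=
    norm_iteratedFDerivWithin_le_holderSpaceNorm (lam := lam) hW hs hu.1 hj hx
  refine ⟨⟨hu.1, by positivity, fun j hj x hx => (hle hj hx).trans (by linarith)⟩,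
    fun x hx y hy => ?_⟩
  rcases eq_or_ne lam 0 with rfl | hlam
  · rw [Real.rpow_zero, mul_one, two_mul]
    exact (norm_sub_le _ _).trans (add_le_add (hle le_rfl hx) (hle le_rfl hy))
  · exact (hu.norm_iteratedFDerivWithin_sub_le hlam hx hy).trans (by gcongr; linarith)

theorem HolderSpaceMem.sub (hs : UniqueDiffOn ℝ (closure W)) (hu : HolderSpaceMem k lam W u)
    (hv : HolderSpaceMem k lam W v) : HolderSpaceMem k lam W (u - v) := by
  obtain ⟨Cu, hCu⟩ := hu.2
  obtain ⟨Cv, hCv⟩ := hv.2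
  refine ⟨hu.1.sub hv.1, Cu + Cv, fun x hx y hy => ?_⟩
  rw [iteratedFDerivWithin_sub_apply (hu.1 x hx) (hv.1 x hx) hs hx,
    iteratedFDerivWithin_sub_apply (hu.1 y hy) (hv.1 y hy) hs hy, sub_sub_sub_comm, add_mul]
  exact (norm_sub_le _ _).trans (add_le_add (hCu x hx y hy) (hCv x hx y hy))

theorem HolderBound.holderSpaceNorm_le (hu : HolderBound k lam (closure W) u a) :
    holderSpaceNorm k lam W u ≤ (k + 2) * a := by
  have ha := hu.nonneg
  calc holderSpaceNorm k lam W u ≤ (Finset.range (k + 1)).card • a + a := by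
        refine add_le_add (Finset.sum_le_card_nsmul _ _ _ fun j hj => Real.iSup_le
          (fun x => hu.norm_le j (Nat.lt_succ_iff.1 (Finset.mem_range.1 hj)) x x.2) ha) ?_
        split_ifs
        exacts [ha, Real.iSup_le (fun q => div_le_of_le_mul₀ (by positivity) ha
          (hu.holder _ q.2.1 _ q.2.2)) ha]
    _ = (k + 2) * a := by
        rw [Finset.card_range, nsmul_eq_mul]
        push_cast
        ring

end HolderSpace

theorem holder_composition_estimate_general {m p : ℕ}
    (U : Set (EuclideanSpace ℝ (Fin m))) (V : Set (EuclideanSpace ℝ (Fin p)))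
    (hUo : IsOpen U) (hUconv : Convex ℝ U) (hUpre : IsCompact (closure U))
    (hVo : IsOpen V) (hVconv : Convex ℝ V) (hVpre : IsCompact (closure V))
    (k : ℕ) (lam : ℝ) (hlam : lam ∈ Ico (0 : ℝ) 1)
    (f : EuclideanSpace ℝ (Fin p) → ℝ) (hf : HolderSpaceMem (k + 2) 0 V f)
    (u₀ : EuclideanSpace ℝ (Fin m) → EuclideanSpace ℝ (Fin p))
    (hu₀ : HolderSpaceMem k lam U u₀) (hu₀V : MapsTo u₀ (closure U) V) :
    ∃ δ : ℝ, 0 < δ ∧ ∃ C : ℝ,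
      ∀ u : EuclideanSpace ℝ (Fin m) → EuclideanSpace ℝ (Fin p),
        HolderSpaceMem k lam U u → MapsTo u (closure U) V →
        holderSpaceNorm k lam U (u - u₀) ≤ δ →
        holderSpaceNorm k lam U (f ∘ u - f ∘ u₀) ≤ C * holderSpaceNorm k lam U (u - u₀) := by
  have hUd := hUo.uniqueDiffOn_closure hUconv
  have hVd := hVo.uniqueDiffOn_closure hVconv
  obtain ⟨D, hD⟩ := Metric.isBounded_iff.1 hUpre.isBounded
  have hR (x) (hx : x ∈ closure U) (y) (hy : y ∈ closure U) : ‖x - y‖ ≤ max 1 D :=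
    (dist_eq_norm x y ▸ hD hx hy).trans (le_max_right _ _)
  set M := 2 * holderSpaceNorm k lam U u₀
  set cf := 2 * holderSpaceNorm (k + 2) 0 V f
  have hu₀M := hu₀.holderBound hUpre hUd
  obtain ⟨C, hC⟩ := exists_holderBound_comp_sub_comp hUconv.closure hUd (le_max_left 1 D) hR
    (Ico_subset_Icc_self hlam) hVconv.closure hVd k (M + 2)
  refine ⟨1, one_pos, (k + 2) * (C * cf * 2), fun u hu huV hδ => ?_⟩
  have hv := (hu.sub hUd hu₀).holderBound hUpre hUd
  have huM : HolderBound k lam (closure U) u (M + 2) :=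
    ((hu₀M.add hUd hv).congr (fun x _ => by simp)).mono (by linarith)
  have hdiff := hC f u₀ u _ _ (hu₀M.mono (by linarith)) huM hv
    (fun x hx => subset_closure (hu₀V hx)) (fun x hx => subset_closure (huV hx))
    (hf.holderBound hVpre hVd).toDerivBound
  calc holderSpaceNorm k lam U (f ∘ u - f ∘ u₀) ≤ _ := hdiff.holderSpaceNorm_le
    _ = _ := by ring

/-- **Lemma 2.1** (composition estimate in Hölder spaces).  Let `U ⊂ ℝ^m` and `V ⊂ ℝ^p` be
convex precompact open sets, `k ≥ 1` an integer, `λ ∈ [0,1)`.  Given `f ∈ C^{k+2}(V̄;ℝ)`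
and `u₀ ∈ C^{k,λ}(Ū;V)`, there are `δ > 0` and `C` such that for all `u ∈ C^{k,λ}(Ū;V)`
with `‖u − u₀‖_{k,λ;Ū} ≤ δ` one has `‖f∘u − f∘u₀‖_{k,λ;Ū} ≤ C ‖u − u₀‖_{k,λ;Ū}`. -/
theorem holder_composition_estimate {m p : ℕ}
    (U : Set (EuclideanSpace ℝ (Fin m))) (V : Set (EuclideanSpace ℝ (Fin p)))
    (hUo : IsOpen U) (hUconv : Convex ℝ U) (hUpre : IsCompact (closure U))
    (hVo : IsOpen V) (hVconv : Convex ℝ V) (hVpre : IsCompact (closure V))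
    (k : ℕ) (hk : 1 ≤ k) (lam : ℝ) (hlam : lam ∈ Ico (0 : ℝ) 1)
    (f : EuclideanSpace ℝ (Fin p) → ℝ) (hf : HolderSpaceMem (k + 2) 0 V f)
    (u₀ : EuclideanSpace ℝ (Fin m) → EuclideanSpace ℝ (Fin p))
    (hu₀ : HolderSpaceMem k lam U u₀) (hu₀V : MapsTo u₀ (closure U) V) :
    ∃ δ : ℝ, 0 < δ ∧ ∃ C : ℝ,
      ∀ u : EuclideanSpace ℝ (Fin m) → EuclideanSpace ℝ (Fin p),
        HolderSpaceMem k lam U u → MapsTo u (closure U) V →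
        holderSpaceNorm k lam U (u - u₀) ≤ δ →
        holderSpaceNorm k lam U (f ∘ u - f ∘ u₀) ≤ C * holderSpaceNorm k lam U (u - u₀) :=
  holder_composition_estimate_general U V hUo hUconv hUpre hVo hVconv hVpre k lam hlam f hf u₀ hu₀
    hu₀V
end
end

section
/- Under these hypotheses, let K ⊂ U₀ be compact and fix constants C₁ > 0 and α ∈ (0,λ). Then there exists ε > 0 such that for every x₀ ∈ K the following hold: every γ ∈ 𝒳(x₀,C₁,α,ε) satisfies γ(t) ∈ U for all t ∈ (0,ε] and (1/2)t ≤ y(γ(t)) ≤ (3/2)t for all t ∈ [0,ε] (where y(γ(t)) denotes the last component of γ(t)); the integrals ∫₀ᵗ A(γ(τ)) dτ and ∫₀ᵗ B(γ(τ)) dτ converge for every t ∈ [0,ε]; and the map T sends 𝒳(x₀,C₁,α,ε) into itself. -/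
open Set MeasureTheory

noncomputable section

/-- Membership in the space `𝒳(x₀,C₁,α,ε)` of continuous curves
`γ(t) = (x₀ + a(t), t + b(t))` on `[0,ε]` with `|a(t)| ≤ C₁ t^α` and
`|b(t)| ≤ C₁ t^{α+1}`. -/
def InX {m : ℕ} (x₀ : EuclideanSpace ℝ (Fin m)) (C₁ α ε : ℝ)
    (γ : ℝ → EuclideanSpace ℝ (Fin m) × ℝ) : Prop :=
  ContinuousOn γ (Icc 0 ε) ∧
    ∀ t ∈ Icc (0:ℝ) ε, ‖(γ t).1 - x₀‖ ≤ C₁ * t ^ α ∧ |(γ t).2 - t| ≤ C₁ * t ^ (α + 1)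

/-- The Picard-type map `T` associated to the vector field `(A, 1 + B)`:
`(Tγ)(t) = (x₀ + ∫₀ᵗ A(γ(τ)) dτ, t + ∫₀ᵗ B(γ(τ)) dτ)`. -/
noncomputable def Tmap {m : ℕ}
    (A : EuclideanSpace ℝ (Fin m) × ℝ → EuclideanSpace ℝ (Fin m))
    (B : EuclideanSpace ℝ (Fin m) × ℝ → ℝ)
    (x₀ : EuclideanSpace ℝ (Fin m)) (γ : ℝ → EuclideanSpace ℝ (Fin m) × ℝ) :
    ℝ → EuclideanSpace ℝ (Fin m) × ℝ :=
  fun t => (x₀ + ∫ τ in (0:ℝ)..t, A (γ τ), t + ∫ τ in (0:ℝ)..t, B (γ τ))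

/-! Along a curve `γ ∈ 𝒳` the height `y(γ(t))` stays between `t/2` and `3t/2`, so the bounds
on the vector field give `|A(γ(τ))| ≲ τ^{λ-1}` and `|B(γ(τ))| ≲ τ^λ`. Both are integrable at
`0` and integrating gains one power of `t`, so the integrals are `O(t^λ)` and `O(t^{λ+1})`.
Since `α < λ`, the surplus factor `ε^{λ-α}` absorbs every constant once `ε` is small. -/

open Filter Topology

lemma EuclideanSpace.norm_le_sqrt_card_mul {m : ℕ} (x : EuclideanSpace ℝ (Fin m)) {M : ℝ}
    (hM : 0 ≤ M) (h : ∀ i, |x i| ≤ M) : ‖x‖ ≤ √m * M := by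
  calc ‖x‖ = √(∑ i, |x i| ^ 2) := by simp [EuclideanSpace.norm_eq]
    _ ≤ √(∑ _i : Fin m, M ^ 2) :=
        Real.sqrt_le_sqrt (Finset.sum_le_sum fun i _ => pow_le_pow_left₀ (abs_nonneg _) (h i) 2)
    _ = √m * M := by simp [Real.sqrt_mul, Real.sqrt_sq hM]

lemma eventually_nhdsGT_zero_mul_rpow_lt (c β : ℝ) {d : ℝ} (hβ : 0 < β) (hd : 0 < d) :
    ∀ᶠ ε in 𝓝[>] 0, c * ε ^ β < d := by
  have : Tendsto (fun ε : ℝ => c * ε ^ β) (𝓝[>] 0) (𝓝 0) := by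
    simpa [Real.zero_rpow hβ.ne'] using
      ((Real.continuousAt_rpow_const 0 β (Or.inr hβ.le)).tendsto.const_mul c).mono_left
        nhdsWithin_le_nhds
  exact this.eventually_lt_const hd

lemma mul_rpow_le_mul_rpow_of_mul_rpow_sub_le {c d t ε r s : ℝ} (hc : 0 ≤ c) (ht : 0 ≤ t)
    (htε : t ≤ ε) (hs : 0 ≤ s) (hsr : s ≤ r) (hε : c * ε ^ (r - s) ≤ d) :
    c * t ^ r ≤ d * t ^ s := by
  have hrs : 0 ≤ r - s := sub_nonneg.2 hsr
  calc c * t ^ r = c * t ^ (r - s) * t ^ s := by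
        rw [mul_assoc, ← Real.rpow_add_of_nonneg ht hrs hs, sub_add_cancel]
    _ ≤ c * ε ^ (r - s) * t ^ s := by gcongr
    _ ≤ d * t ^ s := by gcongr

section PowerIntegrals

variable {E : Type*} [NormedAddCommGroup E] {f : ℝ → E} {ε M p t : ℝ}

lemma intervalIntegrable_of_norm_le_rpow (hp : -1 < p) (hf : ContinuousOn f (Ioc 0 ε))
    (hbd : ∀ τ ∈ Ioc 0 ε, ‖f τ‖ ≤ M * τ ^ p) (ht : t ∈ Icc 0 ε) :
    IntervalIntegrable f volume 0 t := by
  have hsub : Ioc 0 t ⊆ Ioc 0 ε := Ioc_subset_Ioc_right ht.2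
  rw [intervalIntegrable_iff_integrableOn_Ioc_of_le ht.1]
  refine ((intervalIntegral.intervalIntegrable_rpow' hp).const_mul M).1.mono'
    ((hf.mono hsub).aestronglyMeasurable measurableSet_Ioc) ?_
  exact (ae_restrict_iff' measurableSet_Ioc).2 (.of_forall fun τ hτ => hbd τ (hsub hτ))

lemma norm_integral_le_mul_rpow_of_norm_le_rpow [NormedSpace ℝ E] {C s : ℝ} (hp : -1 < p)
    (hM : 0 ≤ M) (hs : 0 ≤ s) (hsp : s ≤ p + 1) (hbd : ∀ τ ∈ Ioc 0 ε, ‖f τ‖ ≤ M * τ ^ p)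
    (hε : M / (p + 1) * ε ^ (p + 1 - s) ≤ C) (ht : t ∈ Icc 0 ε) :
    ‖∫ τ in 0..t, f τ‖ ≤ C * t ^ s := by
  have hp1 : 0 < p + 1 := by linarith
  calc ‖∫ τ in 0..t, f τ‖ ≤ ∫ τ in 0..t, M * τ ^ p :=
        intervalIntegral.norm_integral_le_of_norm_le ht.1
          (.of_forall fun τ hτ => hbd τ ⟨hτ.1, hτ.2.trans ht.2⟩)
          ((intervalIntegral.intervalIntegrable_rpow' hp).const_mul M)
    _ = M / (p + 1) * t ^ (p + 1) := by
        rw [intervalIntegral.integral_const_mul, integral_rpow (Or.inl hp),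
          Real.zero_rpow hp1.ne']
        ring
    _ ≤ C * t ^ s :=
        mul_rpow_le_mul_rpow_of_mul_rpow_sub_le (by positivity) ht.1 ht.2 hs hsp hε

end PowerIntegrals

section AlongCurves

variable {X : Type*} {S : Set (X × ℝ)} {γ : ℝ → X × ℝ} {C p ε : ℝ}

lemma norm_comp_le_of_abs_apply_le_rpow_of_nonpos {m : ℕ} {F : X × ℝ → EuclideanSpace ℝ (Fin m)}
    (hC : 0 ≤ C) (hp : p ≤ 0) (hF : ∀ q ∈ S, ∀ i, |F q i| ≤ C * q.2 ^ p) (hγ : MapsTo γ (Ioc 0 ε) S)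
    (hy : ∀ t ∈ Icc 0 ε, t / 2 ≤ (γ t).2 ∧ (γ t).2 ≤ 3 * t / 2) (τ : ℝ) (hτ : τ ∈ Ioc 0 ε) :
    ‖F (γ τ)‖ ≤ √m * C * 2 ^ (-p) * τ ^ p := by
  have hτ2 : 0 < τ / 2 := half_pos hτ.1
  have hyτ := (hy τ (Ioc_subset_Icc_self hτ)).1
  calc ‖F (γ τ)‖ ≤ √m * (C * (γ τ).2 ^ p) :=
        EuclideanSpace.norm_le_sqrt_card_mul _
          (mul_nonneg hC (Real.rpow_nonneg (hτ2.le.trans hyτ) _)) (hF _ (hγ hτ))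
    _ ≤ √m * (C * (τ / 2) ^ p) := by
        gcongr ?_ * (?_ * ?_)
        exact Real.rpow_le_rpow_of_nonpos hτ2 hyτ hp
    _ = √m * C * 2 ^ (-p) * τ ^ p := by
        rw [Real.div_rpow hτ.1.le zero_le_two, div_eq_mul_inv, ← Real.rpow_neg zero_le_two]
        ring

lemma norm_comp_le_of_abs_le_rpow_of_nonneg {G : X × ℝ → ℝ} (hC : 0 ≤ C) (hp : 0 ≤ p)
    (hG : ∀ q ∈ S, |G q| ≤ C * q.2 ^ p) (hγ : MapsTo γ (Ioc 0 ε) S)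
    (hy : ∀ t ∈ Icc 0 ε, t / 2 ≤ (γ t).2 ∧ (γ t).2 ≤ 3 * t / 2) (τ : ℝ) (hτ : τ ∈ Ioc 0 ε) :
    ‖G (γ τ)‖ ≤ C * (3 / 2) ^ p * τ ^ p := by
  have hyτ := hy τ (Ioc_subset_Icc_self hτ)
  calc ‖G (γ τ)‖ ≤ C * (γ τ).2 ^ p := hG _ (hγ hτ)
    _ ≤ C * (3 / 2 * τ) ^ p := by
        gcongr
        exacts [by linarith [hτ.1], hyτ.2.trans_eq (by ring)]
    _ = C * (3 / 2) ^ p * τ ^ p := by rw [Real.mul_rpow (by norm_num) hτ.1.le]; ring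

end AlongCurves

namespace InX

variable {m : ℕ} {x₀ : EuclideanSpace ℝ (Fin m)} {C₁ α ε : ℝ}
  {γ : ℝ → EuclideanSpace ℝ (Fin m) × ℝ}

lemma snd_mem_Icc (hγ : InX x₀ C₁ α ε γ) (hC₁ : 0 ≤ C₁) (hα : 0 ≤ α)
    (hε : C₁ * ε ^ α ≤ 1 / 2) {t : ℝ} (ht : t ∈ Icc 0 ε) :
    t / 2 ≤ (γ t).2 ∧ (γ t).2 ≤ 3 * t / 2 := by
  have hsmall : C₁ * t ^ (α + 1) ≤ 1 / 2 * t ^ (1 : ℝ) :=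
    mul_rpow_le_mul_rpow_of_mul_rpow_sub_le hC₁ ht.1 ht.2 zero_le_one (by linarith)
      (by simpa using hε)
  rw [Real.rpow_one] at hsmall
  have := abs_le.1 ((hγ.2 t ht).2.trans hsmall)
  constructor <;> linarith

lemma mapsTo_Ioc_prod (hγ : InX x₀ C₁ α ε γ) (hC₁ : 0 ≤ C₁) (hα : 0 ≤ α)
    {K U₀ : Set (EuclideanSpace ℝ (Fin m))} {δ ε₀ : ℝ} (hKδ : Metric.thickening δ K ⊆ U₀)
    (hx₀ : x₀ ∈ K) (hεx : C₁ * ε ^ α < δ) (hεy : C₁ * ε ^ α ≤ 1 / 2) (hεε₀ : 3 / 2 * ε < ε₀) :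
    MapsTo γ (Ioc 0 ε) (U₀ ×ˢ Ioo 0 ε₀) := by
  intro t ht
  have ht' : t ∈ Icc 0 ε := Ioc_subset_Icc_self ht
  have hy := hγ.snd_mem_Icc hC₁ hα hεy ht'
  refine ⟨hKδ (Metric.mem_thickening_iff.2 ⟨x₀, hx₀, ?_⟩), by linarith [ht.1],
    by linarith [ht.2]⟩
  calc dist (γ t).1 x₀ ≤ C₁ * t ^ α := by rw [dist_eq_norm]; exact (hγ.2 t ht').1
    _ ≤ C₁ * ε ^ α := mul_le_mul_of_nonneg_left (Real.rpow_le_rpow ht.1.le ht.2 hα) hC₁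
    _ < δ := hεx

end InX

lemma inX_Tmap {m : ℕ} {A : EuclideanSpace ℝ (Fin m) × ℝ → EuclideanSpace ℝ (Fin m)}
    {B : EuclideanSpace ℝ (Fin m) × ℝ → ℝ} {x₀ : EuclideanSpace ℝ (Fin m)} {C₁ α ε : ℝ}
    {γ : ℝ → EuclideanSpace ℝ (Fin m) × ℝ} (hε : 0 ≤ ε)
    (hA : IntervalIntegrable (fun τ => A (γ τ)) volume 0 ε)
    (hB : IntervalIntegrable (fun τ => B (γ τ)) volume 0 ε)
    (hAbd : ∀ t ∈ Icc 0 ε, ‖∫ τ in 0..t, A (γ τ)‖ ≤ C₁ * t ^ α)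
    (hBbd : ∀ t ∈ Icc 0 ε, |∫ τ in 0..t, B (γ τ)| ≤ C₁ * t ^ (α + 1)) :
    InX x₀ C₁ α ε (Tmap A B x₀ γ) := by
  refine ⟨?_, fun t ht => by simpa [Tmap] using ⟨hAbd t ht, hBbd t ht⟩⟩
  rw [← uIcc_of_le hε]
  exact (continuousOn_const.add (intervalIntegral.continuousOn_primitive_interval' hA
    left_mem_uIcc)).prodMk (continuousOn_id.add
      (intervalIntegral.continuousOn_primitive_interval' hB left_mem_uIcc))

theorem picard_map_into_itself_general {m : ℕ}
    (U₀ : Set (EuclideanSpace ℝ (Fin m))) (hU₀ : IsOpen U₀)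
    (ε₀ : ℝ) (hε₀ : 0 < ε₀)
    (A : EuclideanSpace ℝ (Fin m) × ℝ → EuclideanSpace ℝ (Fin m))
    (B : EuclideanSpace ℝ (Fin m) × ℝ → ℝ)
    (hV : ContDiffOn ℝ 1 (fun q => (A q, 1 + B q)) (U₀ ×ˢ Ioo 0 ε₀))
    (C₀ : ℝ) (hC₀ : 0 < C₀) (lam : ℝ) (hlam : lam ∈ Ioo (0 : ℝ) 1)
    (hB : ∀ q ∈ U₀ ×ˢ Ioo (0:ℝ) ε₀, |B q| ≤ C₀ * q.2 ^ lam)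
    (hA : ∀ q ∈ U₀ ×ˢ Ioo (0:ℝ) ε₀, ∀ i : Fin m,
      |A q i| ≤ C₀ * q.2 ^ (lam - 1))
    (K : Set (EuclideanSpace ℝ (Fin m))) (hK : IsCompact K) (hKU : K ⊆ U₀)
    (C₁ : ℝ) (hC₁ : 0 < C₁) (α : ℝ) (hα : α ∈ Ioo (0 : ℝ) lam) :
    ∃ ε : ℝ, 0 < ε ∧ ∀ x₀ ∈ K, ∀ γ : ℝ → EuclideanSpace ℝ (Fin m) × ℝ,
      InX x₀ C₁ α ε γ →
        (∀ t ∈ Ioc (0:ℝ) ε, γ t ∈ U₀ ×ˢ Ioo (0:ℝ) ε₀) ∧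
        (∀ t ∈ Icc (0:ℝ) ε, t / 2 ≤ (γ t).2 ∧ (γ t).2 ≤ 3 * t / 2) ∧
        (∀ t ∈ Icc (0:ℝ) ε,
          IntervalIntegrable (fun τ => A (γ τ)) volume 0 t ∧
          IntervalIntegrable (fun τ => B (γ τ)) volume 0 t) ∧
        InX x₀ C₁ α ε (Tmap A B x₀ γ) := by
  obtain ⟨hlam0, hlam1⟩ := hlam
  obtain ⟨hα0, hαlam⟩ := hα
  obtain ⟨δ, hδ, hKδ⟩ := hK.exists_thickening_subset_open hU₀ hKU
  have hAc : ContinuousOn A (U₀ ×ˢ Ioo 0 ε₀) := hV.continuousOn.fst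
  have hBc : ContinuousOn B (U₀ ×ˢ Ioo 0 ε₀) :=
    (hV.continuousOn.snd.sub continuousOn_const).congr fun q _ =>
      (add_sub_cancel_left 1 (B q)).symm
  set MA := √m * C₀ * 2 ^ (-(lam - 1))
  set MB := C₀ * (3 / 2) ^ lam
  obtain ⟨ε, ⟨hεy, hεx, hεε₀, hεA, hεB⟩, hε⟩ :=
    ((eventually_nhdsGT_zero_mul_rpow_lt C₁ α hα0 one_half_pos).and <|
      (eventually_nhdsGT_zero_mul_rpow_lt C₁ α hα0 hδ).and <|
      (eventually_nhdsGT_zero_mul_rpow_lt (3 / 2) 1 one_pos hε₀).and <|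
      (eventually_nhdsGT_zero_mul_rpow_lt (MA / (lam - 1 + 1)) (lam - 1 + 1 - α)
        (by linarith) hC₁).and
      (eventually_nhdsGT_zero_mul_rpow_lt (MB / (lam + 1)) (lam + 1 - (α + 1))
        (by linarith) hC₁)).and
      self_mem_nhdsWithin |>.exists
  refine ⟨ε, hε, fun x₀ hx₀ γ hγ => ?_⟩
  have hy (t) (ht : t ∈ Icc 0 ε) := hγ.snd_mem_Icc hC₁.le hα0.le hεy.le ht
  have hU := hγ.mapsTo_Ioc_prod hC₁.le hα0.le hKδ hx₀ hεx hεy.le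
    (by simpa using hεε₀)
  have hAγ := norm_comp_le_of_abs_apply_le_rpow_of_nonpos hC₀.le (by linarith) hA hU hy
  have hBγ := norm_comp_le_of_abs_le_rpow_of_nonneg hC₀.le hlam0.le hB hU hy
  have hγc : ContinuousOn γ (Ioc 0 ε) := hγ.1.mono Ioc_subset_Icc_self
  have hintA (t) (ht : t ∈ Icc 0 ε) : IntervalIntegrable (fun τ => A (γ τ)) volume 0 t :=
    intervalIntegrable_of_norm_le_rpow (by linarith) (hAc.comp hγc hU) hAγ ht
  have hintB (t) (ht : t ∈ Icc 0 ε) : IntervalIntegrable (fun τ => B (γ τ)) volume 0 t :=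
    intervalIntegrable_of_norm_le_rpow (by linarith) (hBc.comp hγc hU) hBγ ht
  have hεmem : ε ∈ Icc 0 ε := ⟨hε.le, le_rfl⟩
  refine ⟨hU, hy, fun t ht => ⟨hintA t ht, hintB t ht⟩,
    inX_Tmap hε.le (hintA ε hεmem) (hintB ε hεmem) (fun t ht => ?_) (fun t ht => ?_)⟩
  · exact norm_integral_le_mul_rpow_of_norm_le_rpow (by linarith) (by positivity) hα0.le
      (by linarith) hAγ hεA.le ht
  · exact norm_integral_le_mul_rpow_of_norm_le_rpow (by linarith) (by positivity) (by linarith)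
      (by linarith) hBγ hεB.le ht

/-- **The Picard map `T` sends `𝒳` into itself for small `ε`.**  Under the hypotheses on
the vector field `(A, 1+B)`, for any compact `K ⊂ U₀`, `C₁ > 0` and `α ∈ (0,λ)` there is
`ε > 0` such that for every `x₀ ∈ K` and `γ ∈ 𝒳(x₀,C₁,α,ε)`: `γ(t) ∈ U` for
`t ∈ (0,ε]`, `t/2 ≤ y(γ(t)) ≤ 3t/2` on `[0,ε]`, the integrals defining `Tγ` converge,
and `Tγ ∈ 𝒳(x₀,C₁,α,ε)`. -/
theorem picard_map_into_itself {m : ℕ} (hm : 1 ≤ m)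
    (U₀ : Set (EuclideanSpace ℝ (Fin m))) (hU₀ : IsOpen U₀)
    (ε₀ : ℝ) (hε₀ : 0 < ε₀)
    (A : EuclideanSpace ℝ (Fin m) × ℝ → EuclideanSpace ℝ (Fin m))
    (B : EuclideanSpace ℝ (Fin m) × ℝ → ℝ)
    (hV : ContDiffOn ℝ 1 (fun q => (A q, 1 + B q)) (U₀ ×ˢ Ioo 0 ε₀))
    (C₀ : ℝ) (hC₀ : 0 < C₀) (lam : ℝ) (hlam : lam ∈ Ioo (0 : ℝ) 1)
    (hB : ∀ q ∈ U₀ ×ˢ Ioo (0:ℝ) ε₀, |B q| ≤ C₀ * q.2 ^ lam)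
    (hBx : ∀ q ∈ U₀ ×ˢ Ioo (0:ℝ) ε₀, ∀ j : Fin m,
      |fderiv ℝ B q (EuclideanSpace.single j 1, 0)| ≤ C₀ * q.2 ^ lam)
    (hBy : ∀ q ∈ U₀ ×ˢ Ioo (0:ℝ) ε₀,
      |q.2 * fderiv ℝ B q (0, 1)| ≤ C₀ * q.2 ^ lam)
    (hA : ∀ q ∈ U₀ ×ˢ Ioo (0:ℝ) ε₀, ∀ i : Fin m,
      |A q i| ≤ C₀ * q.2 ^ (lam - 1))
    (hAx : ∀ q ∈ U₀ ×ˢ Ioo (0:ℝ) ε₀, ∀ i j : Fin m,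
      |fderiv ℝ (fun w => A w i) q (EuclideanSpace.single j 1, 0)| ≤ C₀ * q.2 ^ (lam - 1))
    (hAy : ∀ q ∈ U₀ ×ˢ Ioo (0:ℝ) ε₀, ∀ i : Fin m,
      |q.2 * fderiv ℝ (fun w => A w i) q (0, 1)| ≤ C₀ * q.2 ^ (lam - 1))
    (K : Set (EuclideanSpace ℝ (Fin m))) (hK : IsCompact K) (hKU : K ⊆ U₀)
    (C₁ : ℝ) (hC₁ : 0 < C₁) (α : ℝ) (hα : α ∈ Ioo (0 : ℝ) lam) :
    ∃ ε : ℝ, 0 < ε ∧ ∀ x₀ ∈ K, ∀ γ : ℝ → EuclideanSpace ℝ (Fin m) × ℝ,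
      InX x₀ C₁ α ε γ →
        (∀ t ∈ Ioc (0:ℝ) ε, γ t ∈ U₀ ×ˢ Ioo (0:ℝ) ε₀) ∧
        (∀ t ∈ Icc (0:ℝ) ε, t / 2 ≤ (γ t).2 ∧ (γ t).2 ≤ 3 * t / 2) ∧
        (∀ t ∈ Icc (0:ℝ) ε,
          IntervalIntegrable (fun τ => A (γ τ)) volume 0 t ∧
          IntervalIntegrable (fun τ => B (γ τ)) volume 0 t) ∧
        InX x₀ C₁ α ε (Tmap A B x₀ γ) :=
  picard_map_into_itself_general U₀ hU₀ ε₀ hε₀ A B hV C₀ hC₀ lam hlam hB hA K hK hKU C₁ hC₁ α hα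
end
end

section
/- Under these hypotheses, let x₀ ∈ U₀ and ε′ ∈ (0,ε₀), and let γ : [0,ε′] → ℝ^{m+1} be any continuous map with γ(0) = (x₀,0), γ(t) ∈ U for all t ∈ (0,ε′], γ differentiable on (0,ε′], and γ′(t) = V(γ(t)) for all t ∈ (0,ε′]. Write γ(t) = (x₀ + a(t), t + b(t)). Then there exist constants C > 0 and ε ∈ (0,ε′], depending only on m, C₀, λ and ε₀ (not on γ or x₀), such that |b(t)| ≤ C t^{λ+1} and |a(t)| ≤ C t^{λ} for all t ∈ [0,ε]. -/
/-!
Write `y = (γ ·).2`, so `y' = 1 + B` with `|B| ≤ C₀ y^λ`. Since `y < ε₀`, a first integration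
gives `y(t) ≤ K t` with `K = 1 + C₀ ε₀^λ`; feeding this back gives
`|y(t) - t| ≤ D t^(λ+1)` with `D = C₀ K^λ / (λ + 1)`. Hence `y(t) ≥ t / 2` as long as
`D t^λ ≤ 1/2`, and there `|A| ≤ √m C₀ (t/2)^(λ-1)`, whose integral is of order `t^λ`.
The integrations are mean value inequalities against `c t^p / p` on `[s, t]`, followed by
`s → 0⁺`: nothing is known about the derivative at `0`.
-/

open Set Filter Topology

theorem norm_image_sub_le_sub_of_norm_deriv_le_deriv_Ioo {E : Type*} [NormedAddCommGroup E]
    [NormedSpace ℝ E] {f f' : ℝ → E} {G G' : ℝ → ℝ} {a b : ℝ} (hab : a ≤ b)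
    (hf : ContinuousOn f (Icc a b)) (hG : ContinuousOn G (Icc a b))
    (hf' : ∀ x ∈ Ioo a b, HasDerivWithinAt f (f' x) (Icc a b) x)
    (hG' : ∀ x ∈ Ioo a b, HasDerivWithinAt G (G' x) (Icc a b) x)
    (bound : ∀ x ∈ Ioo a b, ‖f' x‖ ≤ G' x) :
    ‖f b - f a‖ ≤ G b - G a := by
  rcases hab.eq_or_lt with rfl | hab
  · simp
  have hinterior : ∀ s ∈ Ioo a b, ‖f b - f s‖ ≤ G b - G s := by
    intro s hs
    have hright : ∀ x ∈ Ico s b, Icc a b ∈ 𝓝[≥] x := fun x hx =>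
      Icc_mem_nhdsGE_of_mem ⟨hs.1.le.trans hx.1, hx.2⟩
    have hx : ∀ x ∈ Ico s b, x ∈ Ioo a b := fun x hx => ⟨hs.1.trans_le hx.1, hx.2⟩
    refine image_norm_le_of_norm_deriv_right_le_deriv_boundary'
      (f := fun x => f x - f s) (B := fun x => G x - G s)
      ((hf.mono (Icc_subset_Icc_left hs.1.le)).sub continuousOn_const)
      (fun x hx' => ((hf' x (hx x hx')).sub_const _).mono_of_mem_nhdsWithin (hright x hx'))
      (by simp) ((hG.mono (Icc_subset_Icc_left hs.1.le)).sub continuousOn_const)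
      (fun x hx' => ((hG' x (hx x hx')).sub_const _).mono_of_mem_nhdsWithin (hright x hx'))
      (fun x hx' => bound x (hx x hx')) ⟨hs.2.le, le_rfl⟩
  have := left_nhdsWithin_Ioo_neBot hab
  have hIoo : 𝓝[Ioo a b] a ≤ 𝓝[Icc a b] a := nhdsWithin_mono _ Ioo_subset_Icc_self
  have ha : a ∈ Icc a b := left_mem_Icc.2 hab.le
  exact le_of_tendsto_of_tendsto
    (((hf a ha).tendsto.mono_left hIoo).const_sub (f b)).norm
    (((hG a ha).tendsto.mono_left hIoo).const_sub (G b))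
    (eventually_nhdsWithin_of_forall hinterior)

theorem norm_image_sub_le_rpow_of_norm_deriv_le_rpow {E : Type*} [NormedAddCommGroup E]
    [NormedSpace ℝ E] {f f' : ℝ → E} {T c p : ℝ} (hp : 0 < p)
    (hf : ContinuousOn f (Icc 0 T))
    (hf' : ∀ u ∈ Ioo 0 T, HasDerivWithinAt f (f' u) (Icc 0 T) u)
    (bound : ∀ u ∈ Ioo 0 T, ‖f' u‖ ≤ c * u ^ (p - 1)) :
    ∀ t ∈ Icc 0 T, ‖f t - f 0‖ ≤ c / p * t ^ p := by
  intro t ht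
  have hsub : Icc 0 t ⊆ Icc 0 T := Icc_subset_Icc_right ht.2
  have hu : ∀ u ∈ Ioo 0 t, u ∈ Ioo 0 T := fun u hu => ⟨hu.1, hu.2.trans_le ht.2⟩
  have hG' : ∀ u ∈ Ioo 0 t, HasDerivAt (fun u => c / p * u ^ p) (c * u ^ (p - 1)) u := by
    intro u hu
    have h := (Real.hasDerivAt_rpow_const (p := p) (Or.inl hu.1.ne')).const_mul (c / p)
    rwa [← mul_assoc, div_mul_cancel₀ c hp.ne'] at h
  simpa [Real.zero_rpow hp.ne'] using norm_image_sub_le_sub_of_norm_deriv_le_deriv_Ioo ht.1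
    (hf.mono hsub) (continuousOn_const.mul (Real.continuous_rpow_const hp.le).continuousOn)
    (fun u hu' => (hf' u (hu u hu')).mono hsub) (fun u hu' => (hG' u hu').hasDerivWithinAt)
    (fun u hu' => bound u (hu u hu'))

theorem EuclideanSpace.norm_le_sqrt_card_mul_s7 {ι : Type*} [Fintype ι] (v : EuclideanSpace ℝ ι)
    {c : ℝ} (hc : 0 ≤ c) (h : ∀ i, |v i| ≤ c) : ‖v‖ ≤ √(Fintype.card ι) * c := by
  have hsum : ∑ i, ‖v i‖ ^ 2 ≤ Fintype.card ι * c ^ 2 := by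
    simpa using Finset.sum_le_card_nsmul Finset.univ (fun i => ‖v i‖ ^ 2) (c ^ 2)
      fun i _ => pow_le_pow_left₀ (norm_nonneg _) (h i) 2
  calc ‖v‖ ≤ √(Fintype.card ι * c ^ 2) := by
        rw [EuclideanSpace.norm_eq]; exact Real.sqrt_le_sqrt hsum
    _ = √(Fintype.card ι) * c := by rw [Real.sqrt_mul (Nat.cast_nonneg _), Real.sqrt_sq hc]

theorem Real.rpow_le_two_rpow_neg_mul_of_half_le {u y q : ℝ} (hu : 0 < u) (hy : u / 2 ≤ y)
    (hq : q ≤ 0) : y ^ q ≤ 2 ^ (-q) * u ^ q := by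
  calc y ^ q ≤ (u / 2) ^ q := Real.rpow_le_rpow_of_nonpos (by positivity) hy hq
    _ = 2 ^ (-q) * u ^ q := by
      rw [Real.div_rpow hu.le zero_le_two, Real.rpow_neg zero_le_two, div_eq_inv_mul]

theorem abs_sub_le_rpow_of_hasDerivWithinAt_one_add {y β : ℝ → ℝ} {T ε₀ C₀ lam : ℝ} (hlam : 0 < lam)
    (hC₀ : 0 ≤ C₀) (hy : ContinuousOn y (Icc 0 T)) (hy0 : y 0 = 0)
    (hy' : ∀ u ∈ Ioo 0 T, HasDerivWithinAt y (1 + β u) (Icc 0 T) u)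
    (hyε₀ : ∀ u ∈ Ioo 0 T, y u ∈ Ioo 0 ε₀) (hβ : ∀ u ∈ Ioo 0 T, |β u| ≤ C₀ * y u ^ lam) :
    ∀ t ∈ Icc 0 T, |y t - t| ≤ C₀ * (1 + C₀ * ε₀ ^ lam) ^ lam / (lam + 1) * t ^ (lam + 1) := by
  have hdev : ∀ {c p : ℝ}, 0 < p → (∀ u ∈ Ioo 0 T, |β u| ≤ c * u ^ (p - 1)) →
      ∀ t ∈ Icc 0 T, |y t - t| ≤ c / p * t ^ p := fun hp hbound t ht => by
    simpa [hy0] using norm_image_sub_le_rpow_of_norm_deriv_le_rpow hp (hy.sub continuousOn_id)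
      (fun u hu => by simpa using (hy' u hu).sub (hasDerivWithinAt_id u _)) hbound t ht
  set K := 1 + C₀ * ε₀ ^ lam
  have hyK : ∀ u ∈ Ioo 0 T, y u ≤ K * u := by
    intro u hu
    have hcrude := hdev one_pos (c := C₀ * ε₀ ^ lam) (fun v hv => by
      have hyv := hyε₀ v hv
      calc |β v| ≤ C₀ * y v ^ lam := hβ v hv
        _ ≤ C₀ * ε₀ ^ lam := by gcongr; exact hyv.1.le; exact hyv.2.le
        _ = C₀ * ε₀ ^ lam * v ^ ((1 : ℝ) - 1) := by simp) u (Ioo_subset_Icc_self hu)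
    have := (abs_le.1 hcrude).2
    simp only [div_one, Real.rpow_one] at this
    linarith
  exact hdev (by positivity) fun v hv => by
    have hyv := hyε₀ v hv
    calc |β v| ≤ C₀ * y v ^ lam := hβ v hv
      _ ≤ C₀ * (K * v) ^ lam := by gcongr; exact hyv.1.le; exact hyK v hv
      _ = C₀ * K ^ lam * v ^ (lam + 1 - 1) := by
        have hε₀ : 0 < ε₀ := hyv.1.trans hyv.2
        rw [Real.mul_rpow (by positivity) hv.1.le, add_sub_cancel_right, mul_assoc]

theorem half_le_of_abs_sub_le_mul_rpow {y u D lam : ℝ} (hu : 0 < u) (hD : 0 < D) (hlam : 0 < lam)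
    (hyu : |y - u| ≤ D * u ^ (lam + 1)) (hsmall : u ≤ (2 * D)⁻¹ ^ lam⁻¹) : u / 2 ≤ y := by
  have hDu : D * u ^ lam ≤ 1 / 2 := by
    calc D * u ^ lam ≤ D * (2 * D)⁻¹ := by
          gcongr; exact (Real.le_rpow_inv_iff_of_pos hu.le (by positivity) hlam).1 hsmall
      _ = 1 / 2 := by field_simp
  have := (abs_le.1 hyu).1
  rw [Real.rpow_add_one hu.ne'] at this
  nlinarith

theorem EuclideanSpace.norm_image_sub_le_rpow_of_abs_deriv_le {ι : Type*} [Fintype ι]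
    {x a : ℝ → EuclideanSpace ℝ ι} {y : ℝ → ℝ} {T C₀ lam : ℝ} (hlam₀ : 0 < lam) (hlam₁ : lam ≤ 1)
    (hC₀ : 0 ≤ C₀) (hx : ContinuousOn x (Icc 0 T))
    (hx' : ∀ u ∈ Ioo 0 T, HasDerivWithinAt x (a u) (Icc 0 T) u)
    (hy : ∀ u ∈ Ioo 0 T, u / 2 ≤ y u) (ha : ∀ u ∈ Ioo 0 T, ∀ i, |a u i| ≤ C₀ * y u ^ (lam - 1)) :
    ∀ t ∈ Icc 0 T,
      ‖x t - x 0‖ ≤ √(Fintype.card ι) * C₀ * 2 ^ (1 - lam) / lam * t ^ lam := by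
  refine norm_image_sub_le_rpow_of_norm_deriv_le_rpow hlam₀ hx hx' fun u hu => ?_
  have hyu : 0 < y u := by linarith [hy u hu, hu.1]
  calc ‖a u‖ ≤ √(Fintype.card ι) * (C₀ * y u ^ (lam - 1)) :=
        EuclideanSpace.norm_le_sqrt_card_mul_s7 _ (by positivity) (ha u hu)
    _ ≤ √(Fintype.card ι) * (C₀ * (2 ^ (-(lam - 1)) * u ^ (lam - 1))) := by
        gcongr
        exact Real.rpow_le_two_rpow_neg_mul_of_half_le hu.1 (hy u hu) (by linarith)
    _ = √(Fintype.card ι) * C₀ * 2 ^ (1 - lam) * u ^ (lam - 1) := by rw [neg_sub]; ring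

theorem singular_ode_apriori_bounds_general {m : ℕ}
    (U₀ : Set (EuclideanSpace ℝ (Fin m)))
    (ε₀ : ℝ) (hε₀ : 0 < ε₀)
    (A : EuclideanSpace ℝ (Fin m) × ℝ → EuclideanSpace ℝ (Fin m))
    (B : EuclideanSpace ℝ (Fin m) × ℝ → ℝ)
    (C₀ : ℝ) (hC₀ : 0 < C₀) (lam : ℝ) (hlam : lam ∈ Ioo (0 : ℝ) 1)
    (hB : ∀ q ∈ U₀ ×ˢ Ioo (0:ℝ) ε₀, |B q| ≤ C₀ * q.2 ^ lam)
    (hA : ∀ q ∈ U₀ ×ˢ Ioo (0:ℝ) ε₀, ∀ i : Fin m,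
      |A q i| ≤ C₀ * q.2 ^ (lam - 1)) :
    ∃ C : ℝ, 0 < C ∧ ∃ ε : ℝ, 0 < ε ∧
      ∀ x₀ ∈ U₀, ∀ ε' : ℝ, 0 < ε' → ε' < ε₀ →
        ∀ γ : ℝ → EuclideanSpace ℝ (Fin m) × ℝ,
          ContinuousOn γ (Icc 0 ε') → γ 0 = (x₀, 0) →
          (∀ t ∈ Ioc (0:ℝ) ε', γ t ∈ U₀ ×ˢ Ioo (0:ℝ) ε₀ ∧
            HasDerivWithinAt γ (A (γ t), 1 + B (γ t)) (Icc 0 ε') t) →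
          ∀ t ∈ Icc (0:ℝ) (min ε ε'),
            |(γ t).2 - t| ≤ C * t ^ (lam + 1) ∧ ‖(γ t).1 - x₀‖ ≤ C * t ^ lam := by
  obtain ⟨hlam₀, hlam₁⟩ := hlam
  set D := C₀ * (1 + C₀ * ε₀ ^ lam) ^ lam / (lam + 1)
  set C₂ := √m * C₀ * 2 ^ (1 - lam)
  have hD : 0 < D := by positivity
  refine ⟨max D (C₂ / lam), lt_max_of_lt_left hD, (2 * D)⁻¹ ^ lam⁻¹, by positivity, ?_⟩
  intro x₀ _ ε' _ _ γ hγc hγ0 hγ t ht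
  set T := min ((2 * D)⁻¹ ^ lam⁻¹) ε'
  have hsub : Icc 0 T ⊆ Icc 0 ε' := Icc_subset_Icc_right (min_le_right _ _)
  have hγ' : ∀ u ∈ Ioo 0 T, γ u ∈ U₀ ×ˢ Ioo 0 ε₀ ∧
      HasDerivWithinAt γ (A (γ u), 1 + B (γ u)) (Icc 0 T) u := fun u hu =>
    have h := hγ u ⟨hu.1, hu.2.le.trans (min_le_right _ _)⟩
    ⟨h.1, h.2.mono hsub⟩
  have hb : ∀ t ∈ Icc 0 T, |(γ t).2 - t| ≤ D * t ^ (lam + 1) :=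
    abs_sub_le_rpow_of_hasDerivWithinAt_one_add (β := fun u => B (γ u)) hlam₀ hC₀.le
      ((continuous_snd.comp_continuousOn hγc).mono hsub) (by simp [hγ0])
      (fun u hu => (hasFDerivAt_snd (p := γ u)).comp_hasDerivWithinAt u (hγ' u hu).2)
      (fun u hu => (hγ' u hu).1.2) (fun u hu => hB _ (hγ' u hu).1)
  have ha := EuclideanSpace.norm_image_sub_le_rpow_of_abs_deriv_le hlam₀ hlam₁.le hC₀.le
    ((continuous_fst.comp_continuousOn hγc).mono hsub)
    (fun u hu => (hasFDerivAt_fst (p := γ u)).comp_hasDerivWithinAt u (hγ' u hu).2)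
    (fun u hu => half_le_of_abs_sub_le_mul_rpow hu.1 hD hlam₀ (hb u (Ioo_subset_Icc_self hu))
      (hu.2.le.trans (min_le_left _ _)))
    (fun u hu => hA _ (hγ' u hu).1) t ht
  have ht0 := ht.1
  refine ⟨(hb t ht).trans (by gcongr; exact le_max_left _ _), ?_⟩
  simpa [hγ0] using ha.trans (by gcongr; simp only [Fintype.card_fin]; exact le_max_right _ _)

/-- **A priori bounds for solutions of the singular ODE.**  Let `U₀ ⊂ ℝ^m` be open,
`ε₀ > 0`, `U = U₀ × (0,ε₀)`, and let `V(x,y) = (A(x,y), 1 + B(x,y))` be a `C¹` vector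
field on `U` with `|B| ≤ C₀ y^λ` and `|A^i| ≤ C₀ y^{λ−1}` on `U` for some `C₀ > 0`,
`λ ∈ (0,1)`.  Then there are `C > 0` and `ε > 0`, independent of `γ` and `x₀`, such that
any continuous solution `γ(t) = (x₀ + a(t), t + b(t))` on `[0,ε′]` of `γ' = V(γ)` with
`γ(0) = (x₀,0)` satisfies `|b(t)| ≤ C t^{λ+1}` and `|a(t)| ≤ C t^λ` for
`t ∈ [0, min ε ε′]`. -/
theorem singular_ode_apriori_bounds {m : ℕ} (hm : 1 ≤ m)
    (U₀ : Set (EuclideanSpace ℝ (Fin m))) (hU₀ : IsOpen U₀)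
    (ε₀ : ℝ) (hε₀ : 0 < ε₀)
    (A : EuclideanSpace ℝ (Fin m) × ℝ → EuclideanSpace ℝ (Fin m))
    (B : EuclideanSpace ℝ (Fin m) × ℝ → ℝ)
    (hV : ContDiffOn ℝ 1 (fun q => (A q, 1 + B q)) (U₀ ×ˢ Ioo 0 ε₀))
    (C₀ : ℝ) (hC₀ : 0 < C₀) (lam : ℝ) (hlam : lam ∈ Ioo (0 : ℝ) 1)
    (hB : ∀ q ∈ U₀ ×ˢ Ioo (0:ℝ) ε₀, |B q| ≤ C₀ * q.2 ^ lam)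
    (hA : ∀ q ∈ U₀ ×ˢ Ioo (0:ℝ) ε₀, ∀ i : Fin m,
      |A q i| ≤ C₀ * q.2 ^ (lam - 1)) :
    ∃ C : ℝ, 0 < C ∧ ∃ ε : ℝ, 0 < ε ∧
      ∀ x₀ ∈ U₀, ∀ ε' : ℝ, 0 < ε' → ε' < ε₀ →
        ∀ γ : ℝ → EuclideanSpace ℝ (Fin m) × ℝ,
          ContinuousOn γ (Icc 0 ε') → γ 0 = (x₀, 0) →
          (∀ t ∈ Ioc (0:ℝ) ε', γ t ∈ U₀ ×ˢ Ioo (0:ℝ) ε₀ ∧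
            HasDerivWithinAt γ (A (γ t), 1 + B (γ t)) (Icc 0 ε') t) →
          ∀ t ∈ Icc (0:ℝ) (min ε ε'),
            |(γ t).2 - t| ≤ C * t ^ (lam + 1) ∧ ‖(γ t).1 - x₀‖ ≤ C * t ^ lam :=
  singular_ode_apriori_bounds_general U₀ ε₀ hε₀ A B C₀ hC₀ lam hlam hB hA
end
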